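/- The two-color graph Ramsey number R(B_4, B_5) is at least 18; that is, there exists a simple graph G on 17 vertices such that the complement of G contains no copy of the book B_4 as a subgraph and G contains no copy of the book B_5 as a subgraph. -/

import Mathlib

open SimpleGraph

/-- `ContainsCopy G H` means the graph `H` contains a copy of `G` as a
(not necessarily induced) subgraph. -/
def ContainsCopy {α β : Type*} (G : SimpleGraph α) (H : SimpleGraph β) : Prop :=
  ∃ f : α → β, Function.Injective f ∧ ∀ ⦃u v : α⦄, G.Adj u v → H.Adj (f u) (f v)

/-- The join `G + H` of two graphs: take disjoint copies of `G` and `H` and add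
all edges between them. -/
def graphJoin {α β : Type*} (G : SimpleGraph α) (H : SimpleGraph β) :
    SimpleGraph (α ⊕ β) where
  Adj u v :=
    match u, v with
    | .inl a, .inl b => G.Adj a b
    | .inr a, .inr b => H.Adj a b
    | .inl _, .inr _ => True
    | .inr _, .inl _ => True
  symm := by
    constructor
    intro u v h
    cases u <;> cases v <;> simp_all <;> exact h.symm
  loopless := by
    constructor
    intro u
    cases u <;> simp

/-- The wheel `W n`: the join of a single vertex with a cycle on `n - 1` vertices. -/
def wheelGraph (n : ℕ) : SimpleGraph (Fin 1 ⊕ Fin (n - 1)) :=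
  graphJoin (⊥ : SimpleGraph (Fin 1)) (cycleGraph (n - 1))

/-- The book `B n`: the join of an edge `K₂` with an empty graph on `n` vertices. -/
def bookGraph (n : ℕ) : SimpleGraph (Fin 2 ⊕ Fin n) :=
  graphJoin (⊤ : SimpleGraph (Fin 2)) (⊥ : SimpleGraph (Fin n))

/-- The two-colour graph Ramsey number `R(G₁, G₂)`: the least `n` such that every
simple graph `G` on `n` vertices contains a copy of `G₁`, or its complement
contains a copy of `G₂`. -/
noncomputable def ramseyNumber {α β : Type*} (G₁ : SimpleGraph α) (G₂ : SimpleGraph β) : ℕ :=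
  sInf {n : ℕ | ∀ G : SimpleGraph (Fin n), ContainsCopy G₁ G ∨ ContainsCopy G₂ Gᶜ}

open Finset

lemma bookGraph_adj_ll (n : ℕ) (i j : Fin 2) :
    (bookGraph n).Adj (.inl i) (.inl j) ↔ i ≠ j := Iff.rfl
lemma bookGraph_adj_lr (n : ℕ) (i : Fin 2) (j : Fin n) :
    (bookGraph n).Adj (.inl i) (.inr j) := trivial
lemma bookGraph_adj_rr (n : ℕ) (i j : Fin n) :
    ¬ (bookGraph n).Adj (.inr i) (.inr j) := fun h => h

/-- Build a copy of the book `B n` in `H` from an edge with `n` common neighbours. -/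
lemma build_copy {β : Type*} [DecidableEq β] {H : SimpleGraph β} {n : ℕ} {a b : β}
    (hab : H.Adj a b) (s : Finset β) (hcard : s.card = n)
    (hs : ∀ c ∈ s, H.Adj a c ∧ H.Adj b c) :
    ContainsCopy (bookGraph n) H := by
  have e := s.equivFinOfCardEq hcard
  refine ⟨Sum.elim (fun i => if i = 0 then a else b) (fun i => (e.symm i : β)), ?_, ?_⟩
  · intro x y hxy
    have hmem : ∀ i : Fin n, ((e.symm i : β) ∈ s) := fun i => (e.symm i).2
    cases x with
    | inl i => cases y with
      | inl j =>
        simp only [Sum.elim_inl] at hxy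
        congr 1
        by_cases hi : i = 0 <;> by_cases hj : j = 0
        · rw [hi, hj]
        · rw [if_pos hi, if_neg hj] at hxy; exact absurd hxy hab.ne
        · rw [if_neg hi, if_pos hj] at hxy; exact absurd hxy.symm hab.ne
        · omega
      | inr j =>
        exfalso
        simp only [Sum.elim_inl, Sum.elim_inr] at hxy
        have hj := hs _ (hmem j)
        by_cases hi : i = 0
        · rw [if_pos hi] at hxy; exact hj.1.ne hxy
        · rw [if_neg hi] at hxy; exact hj.2.ne hxy
    | inr i => cases y with
      | inl j =>
        exfalso
        simp only [Sum.elim_inl, Sum.elim_inr] at hxy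
        have hi := hs _ (hmem i)
        by_cases hj : j = 0
        · rw [if_pos hj] at hxy; exact hi.1.ne hxy.symm
        · rw [if_neg hj] at hxy; exact hi.2.ne hxy.symm
      | inr j =>
        simp only [Sum.elim_inr] at hxy
        have : e.symm i = e.symm j := Subtype.ext hxy
        rw [e.symm.injective this]
  · intro u v huv
    cases u with
    | inl i => cases v with
      | inl j =>
        fin_cases i <;> fin_cases j
        · exact absurd rfl huv
        · simpa using hab
        · simpa using hab.symm
        · exact absurd rfl huv
      | inr j =>
        have hj := hs _ (e.symm j).2
        fin_cases i
        · simpa using hj.1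
        · simpa using hj.2
    | inr i => cases v with
      | inl j =>
        have hi := hs _ (e.symm i).2
        fin_cases j
        · simpa using hi.1.symm
        · simpa using hi.2.symm
      | inr j => exact absurd huv (bookGraph_adj_rr n i j)

/-- From a copy of `B n`, extract an edge with `n` common neighbours. -/
lemma copy_gives {β : Type*} [Fintype β] [DecidableEq β] {H : SimpleGraph β}
    [DecidableRel H.Adj] {n : ℕ} (h : ContainsCopy (bookGraph n) H) :
    ∃ a b, H.Adj a b ∧ n ≤ (univ.filter fun c => H.Adj a c ∧ H.Adj b c).card := by
  obtain ⟨f, hinj, hadj⟩ := h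
  refine ⟨f (.inl 0), f (.inl 1), hadj ((bookGraph_adj_ll n 0 1).mpr (by decide)), ?_⟩
  have hsub : (univ : Finset (Fin n)).image (fun i => f (.inr i)) ⊆
      univ.filter fun c => H.Adj (f (.inl 0)) c ∧ H.Adj (f (.inl 1)) c := by
    intro c hc
    simp only [mem_image, mem_univ, true_and] at hc
    obtain ⟨i, rfl⟩ := hc
    simp only [mem_filter, mem_univ, true_and]
    exact ⟨hadj (bookGraph_adj_lr n 0 i), hadj (bookGraph_adj_lr n 1 i)⟩
  calc n = ((univ : Finset (Fin n)).image (fun i => f (.inr i))).card := by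
            rw [Finset.card_image_of_injective _ (fun i j hij => Sum.inr_injective (hinj hij))]
            simp
       _ ≤ _ := Finset.card_le_card hsub

/-- The dichotomy: inside a big common neighbourhood `A` of `v` in `H`, either
some vertex has `k` `H`-neighbours in `A` (giving `B k ⊆ H`), or we find a
`Hᶜ`-edge in `A` with `m` common `Hᶜ`-neighbours (giving `B m ⊆ Hᶜ`). -/
lemma key {N : ℕ} (H : SimpleGraph (Fin N)) [DecidableRel H.Adj] (v : Fin N)
    (A : Finset (Fin N)) (hA : ∀ u ∈ A, H.Adj v u) {k m : ℕ} (hk : 1 ≤ k)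
    (hcard : 2 * k + m ≤ A.card) :
    ContainsCopy (bookGraph k) H ∨ ContainsCopy (bookGraph m) Hᶜ := by
  by_cases hbig : ∃ u ∈ A, k ≤ (A.filter (H.Adj u)).card
  · left
    obtain ⟨u, huA, hku⟩ := hbig
    obtain ⟨t, hts, htcard⟩ := Finset.exists_subset_card_eq hku
    refine build_copy (hA u huA) t htcard fun c hc => ?_
    have hct := hts hc
    rw [mem_filter] at hct
    exact ⟨hA c hct.1, hct.2⟩
  · push_neg at hbig
    right
    have hAne : A.Nonempty := card_pos.mp (by omega)
    obtain ⟨u, hu⟩ := hAne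
    have hfu : (A.filter (H.Adj u)).card < k := hbig u hu
    set B := A \ insert u (A.filter (H.Adj u)) with hB
    have hBcard : k + m ≤ B.card := by
      have h1 : A.card - (insert u (A.filter (H.Adj u))).card ≤ B.card := by
        rw [hB]; exact Finset.le_card_sdiff _ _
      have h2 : (insert u (A.filter (H.Adj u))).card ≤ k := by
        calc (insert u (A.filter (H.Adj u))).card ≤ (A.filter (H.Adj u)).card + 1 :=
              Finset.card_insert_le _ _
          _ ≤ k := by omega
      omega
    have hBne : B.Nonempty := card_pos.mp (by omega)
    obtain ⟨w, hw⟩ := hBne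
    rw [hB, mem_sdiff, mem_insert] at hw
    push_neg at hw
    obtain ⟨hwA, hwu, hwadj⟩ := hw
    have hwadj' : ¬ H.Adj u w := fun h => hwadj (mem_filter.mpr ⟨hwA, h⟩)
    have huw : Hᶜ.Adj u w := by
      rw [compl_adj]; exact ⟨fun h => hwu h.symm, hwadj'⟩
    have hfw : (A.filter (H.Adj w)).card < k := hbig w hwA
    set C := ((A.erase u).erase w) \ (A.filter (H.Adj u) ∪ A.filter (H.Adj w)) with hC
    have hCcard : m ≤ C.card := by
      have h1 : ((A.erase u).erase w).card -
          (A.filter (H.Adj u) ∪ A.filter (H.Adj w)).card ≤ C.card := by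
        rw [hC]; exact Finset.le_card_sdiff _ _
      have h2 : (A.filter (H.Adj u) ∪ A.filter (H.Adj w)).card ≤
          (A.filter (H.Adj u)).card + (A.filter (H.Adj w)).card := Finset.card_union_le _ _
      have h3 : A.card - 2 ≤ ((A.erase u).erase w).card := by
        have := Finset.pred_card_le_card_erase (a := w) (s := A.erase u)
        have := Finset.pred_card_le_card_erase (a := u) (s := A)
        omega
      omega
    obtain ⟨t, hts, htcard⟩ := Finset.exists_subset_card_eq hCcard
    refine build_copy huw t htcard fun c hc => ?_
    have hct := hts hc
    rw [hC, mem_sdiff, mem_erase, mem_erase, mem_union] at hct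
    push_neg at hct
    obtain ⟨⟨hcw, hcu, hcA⟩, hcadju, hcadjw⟩ := hct
    constructor
    · rw [compl_adj]
      exact ⟨fun h => hcu h.symm, fun h => hcadju (mem_filter.mpr ⟨hcA, h⟩)⟩
    · rw [compl_adj]
      exact ⟨fun h => hcw h.symm, fun h => hcadjw (mem_filter.mpr ⟨hcA, h⟩)⟩

lemma mem_ramsey_set :
    ∀ G : SimpleGraph (Fin 30), ContainsCopy (bookGraph 4) G ∨ ContainsCopy (bookGraph 5) Gᶜ := by
  intro G
  classical
  set A1 := univ.filter (G.Adj 0) with hA1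
  set A2 := univ.filter (Gᶜ.Adj 0) with hA2
  have hsum : A1.card + (univ.filter fun u => ¬ G.Adj 0 u).card = 30 := by
    rw [hA1]
    rw [Finset.card_filter_add_card_filter_not]
    simp
  have hA2eq : A2 = (univ.filter fun u => ¬ G.Adj 0 u).erase 0 := by
    ext x
    simp only [hA2, mem_filter, mem_univ, true_and, mem_erase, compl_adj]
    constructor
    · rintro ⟨h1, h2⟩; exact ⟨fun h => h1 h.symm, h2⟩
    · rintro ⟨h1, h2⟩; exact ⟨fun h => h1 h.symm, h2⟩
  have h0mem : (0 : Fin 30) ∈ (univ.filter fun u => ¬ G.Adj 0 u) := by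
    simp [G.irrefl]
  have hA2card : A2.card = (univ.filter fun u => ¬ G.Adj 0 u).card - 1 := by
    rw [hA2eq, Finset.card_erase_of_mem h0mem]
  have hcases : 15 ≤ A1.card ∨ 15 ≤ A2.card := by omega
  rcases hcases with h | h
  · exact key G 0 A1 (fun u hu => (mem_filter.mp hu).2) (by norm_num) (by omega)
  · have := key Gᶜ 0 A2 (fun u hu => (mem_filter.mp hu).2) (k := 5) (m := 4)
      (by norm_num) (by omega)
    rcases this with h' | h'
    · exact Or.inr h'
    · rw [compl_compl] at h'
      exact Or.inl h'

/-- Transfer a copy along an injective adjacency-preserving map. -/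
lemma copy_trans {α β γ : Type*} {A : SimpleGraph α} {H : SimpleGraph β} {K : SimpleGraph γ}
    (h : ContainsCopy A H) (g : β → γ) (hg : Function.Injective g)
    (hadj : ∀ u v, H.Adj u v → K.Adj (g u) (g v)) : ContainsCopy A K := by
  obtain ⟨f, hf, ha⟩ := h
  exact ⟨g ∘ f, hg.comp hf, fun u v h => hadj _ _ (ha h)⟩

/-- The Paley graph on 17 vertices. -/
def paley : SimpleGraph (Fin 17) :=
  SimpleGraph.fromRel (fun x y => x - y ∈ ({1,2,4,8,9,13,15,16} : Finset (Fin 17)))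

instance : DecidableRel paley.Adj := fun x y =>
  decidable_of_iff _ (SimpleGraph.fromRel_adj _ x y).symm

lemma paley_bound : ∀ a b : Fin 17, paley.Adj a b →
    ((univ.filter fun c => paley.Adj a c ∧ paley.Adj b c).card ≤ 3) := by decide

lemma paleyc_bound : ∀ a b : Fin 17, paleyᶜ.Adj a b →
    ((univ.filter fun c => paleyᶜ.Adj a c ∧ paleyᶜ.Adj b c).card ≤ 3) := by decide

lemma no_book5_paley : ¬ ContainsCopy (bookGraph 5) paley := by
  intro h
  obtain ⟨a, b, hab, hcard⟩ := copy_gives h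
  have := paley_bound a b hab
  omega

lemma no_book4_paleyc : ¬ ContainsCopy (bookGraph 4) paleyᶜ := by
  intro h
  obtain ⟨a, b, hab, hcard⟩ := copy_gives h
  have := paleyc_bound a b hab
  omega


/-- **R(B₄, B₅) ≥ 18**: the two-colour Ramsey number of the books `B₄` and `B₅`
is at least 18; that is, there is a graph `G` on 17 vertices whose complement
contains no copy of `B₄` and which contains no copy of `B₅`. -/
theorem ramsey_B4_B5_ge_18 :
    18 ≤ ramseyNumber (bookGraph 4) (bookGraph 5) ∧
    ∃ G : SimpleGraph (Fin 17),
      ¬ ContainsCopy (bookGraph 4) Gᶜ ∧ ¬ ContainsCopy (bookGraph 5) G := by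
  constructor
  · unfold ramseyNumber
    have h30 : 30 ∈ {n : ℕ | ∀ G : SimpleGraph (Fin n),
        ContainsCopy (bookGraph 4) G ∨ ContainsCopy (bookGraph 5) Gᶜ} := mem_ramsey_set
    apply le_csInf ⟨30, h30⟩
    intro b hb
    by_contra hlt
    push_neg at hlt
    have hble : b ≤ 17 := by omega
    set c : Fin b → Fin 17 := Fin.castLE hble with hc
    have hcinj : Function.Injective c := Fin.castLE_injective hble
    rcases hb (SimpleGraph.comap c paleyᶜ) with h | h
    · exact no_book4_paleyc
        (copy_trans h c hcinj (fun u v huv => huv))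
    · refine no_book5_paley (copy_trans h c hcinj (fun u v huv => ?_))
      rw [SimpleGraph.compl_adj] at huv
      obtain ⟨hne, hnadj⟩ := huv
      by_contra hpad
      exact hnadj ((SimpleGraph.compl_adj _ _ _).mpr ⟨fun h' => hne (hcinj h'), hpad⟩)
  · exact ⟨paley, no_book4_paleyc, no_book5_paley⟩
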